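/- For every integer k ≥ 2, every obligatory finite k-uniform hypergraph is k-partite; that is, if F is a finite k-uniform hypergraph such that every k-uniform hypergraph of chromatic number at least ℵ₁ contains a copy of F, then the vertex set of F can be partitioned into k classes so that every edge of F meets each class in exactly one vertex. -/

import Mathlib

/-!
Let `V` be a linear order of cardinality above `ℶ_(n + k)`. In the shift hypergraph on the
`n`-subsets of `V`, an edge consists of the `k` consecutive windows `{aᵢ, …, aᵢ₊ₙ₋₁}`, `i < k`,
of an increasing sequence `a₀ < ⋯ < aₙ₊ₖ₋₂`. An Erdős–Rado argument shows that every colouring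
with at most `ℵ₀` colours has a monochromatic edge, so an obligatory `F` embeds into this
hypergraph via some `φ`.

Consecutive windows differ in one element, and paths in `F` are shorter than `|F|`, so two
windows `φ u`, `φ v` in the same component of `F` satisfy `|φ u \ φ v| < |F|`. Taking
`n > |F|²`, all windows of a component share an element `x`. The rank of `x` drops by exactly one
from each window of an edge to the next, so colouring each vertex `v` by the rank of `x` in `φ v`,
modulo `k`, gives the `k`-partition.
-/

open Cardinal

universe u

/-- A colouring `f` of the vertices is proper for the edge set `E` if no edge
is monochromatic. -/
def IsProperColoring {V : Type*} {α : Type*} (E : Set (Set V)) (f : V → α) : Prop :=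
  ∀ e ∈ E, ∃ x ∈ e, ∃ y ∈ e, f x ≠ f y

/-- The chromatic number of the hypergraph `(V, E)`. -/
noncomputable def chromaticNumber (V : Type u) (E : Set (Set V)) : Cardinal.{u} :=
  sInf { κ : Cardinal.{u} | ∃ (α : Type u) (f : V → α), #α = κ ∧ IsProperColoring E f }

/-- A finite `k`-uniform hypergraph `(VF, EF)` is *obligatory* if every `k`-uniform
hypergraph of chromatic number at least `ℵ₁` contains a copy of it. -/
def Obligatory (k : ℕ) {VF : Type} (EF : Set (Set VF)) : Prop :=
  ∀ (V : Type u) (E : Set (Set V)), (∀ e ∈ E, e.ncard = k) →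
    Cardinal.aleph 1 ≤ chromaticNumber V E →
    ∃ φ : VF → V, Function.Injective φ ∧ ∀ e ∈ EF, φ '' e ∈ E

namespace Finset

variable {V : Type*} [LinearOrder V]

/-- `B` arises from `A` by dropping its minimum and adding a new maximum. Chains of such steps are
exactly the consecutive windows of an increasing sequence. -/
def IsShift (A B : Finset V) : Prop :=
  ∃ x y s, x < y ∧ (∀ t ∈ s, x < t ∧ t < y) ∧ A = insert x s ∧ B = insert y s

def dropMax (W : Finset V) : Finset V := W.filter fun x => ∃ y ∈ W, x < y

def dropMin (W : Finset V) : Finset V := W.filter fun x => ∃ y ∈ W, y < x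

theorem isShift_singleton {x y : V} (h : x < y) : IsShift {x} {y} :=
  ⟨x, y, ∅, h, by simp, rfl, rfl⟩

theorem isShift_dropMax_dropMin {W : Finset V} (hW : 2 ≤ W.card) :
    IsShift W.dropMax W.dropMin := by
  have hne : W.Nonempty := card_pos.1 (by omega)
  have hlt := W.min'_lt_max'_of_card hW
  have hmin := W.min'_mem hne
  have hmax := W.max'_mem hne
  have hbounds := fun t (ht : t ∈ W) => And.intro (W.min'_le t ht) (W.le_max' t ht)
  refine ⟨W.min' hne, W.max' hne, W.filter fun t => W.min' hne < t ∧ t < W.max' hne,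
    hlt, fun t ht => (mem_filter.1 ht).2, ?_, ?_⟩ <;>
  · ext t
    simp only [dropMax, dropMin, mem_filter, mem_insert]
    grind

theorem card_dropMax_add_one {W : Finset V} (hW : W.Nonempty) : W.dropMax.card + 1 = W.card := by
  have hmax := W.max'_mem hW
  have hle := fun t (ht : t ∈ W) => W.le_max' t ht
  have : W.dropMax = W.erase (W.max' hW) := by
    ext t
    simp only [dropMax, mem_filter, mem_erase]
    grind
  rw [this, card_erase_add_one hmax]

namespace IsShift

variable {A B : Finset V}

theorem card_eq (h : IsShift A B) : A.card = B.card := by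
  obtain ⟨x, y, s, -, hs, rfl, rfl⟩ := h
  rw [card_insert_of_notMem fun hx => (hs x hx).1.false,
    card_insert_of_notMem fun hy => (hs y hy).2.false]

theorem ne (h : IsShift A B) : A ≠ B := by
  obtain ⟨x, y, s, hxy, hs, rfl, rfl⟩ := h
  intro hAB
  rcases mem_insert.1 (hAB ▸ mem_insert_self x s) with hx | hx
  exacts [hxy.ne hx, (hs x hx).1.false]

theorem min_lt (h : IsShift A B) : A.min < B.min := by
  obtain ⟨x, y, s, hxy, hs, rfl, rfl⟩ := h
  have hxs : (x : WithTop V) < s.min := by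
    rw [min_eq_inf_withTop, Finset.lt_inf_iff (WithTop.coe_lt_top x)]
    exact fun t ht => WithTop.coe_lt_coe.2 (hs t ht).1
  rw [min_insert, min_insert, min_eq_left hxs.le]
  exact lt_min (WithTop.coe_lt_coe.2 hxy) hxs

theorem card_sdiff_le_one [DecidableEq V] (h : IsShift A B) : (A \ B).card ≤ 1 := by
  obtain ⟨x, y, s, -, -, rfl, rfl⟩ := h
  refine (card_le_card fun t ht => ?_).trans (card_singleton x).le
  simp only [mem_sdiff, mem_insert, not_or] at ht
  exact mem_singleton.2 (ht.1.resolve_right ht.2.2)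

theorem dropMin_eq_dropMax (h : IsShift A B) : A.dropMin = B.dropMax := by
  obtain ⟨x, y, s, hxy, hs, rfl, rfl⟩ := h
  ext t
  simp only [dropMin, dropMax, mem_filter, mem_insert, exists_eq_or_imp]
  grind

theorem card_filter_lt (h : IsShift A B) {x : V} (hA : x ∈ A) (hB : x ∈ B) :
    (A.filter (· < x)).card = (B.filter (· < x)).card + 1 := by
  obtain ⟨a, b, s, hab, hs, rfl, rfl⟩ := h
  have hx : x ∈ s := by grind
  rw [filter_insert, filter_insert, if_pos (hs x hx).1, if_neg (hs x hx).2.not_gt,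
    card_insert_of_notMem fun ha => (hs a (mem_filter.1 ha).1).1.false]

end IsShift

def IsShiftChain (W : ℕ → Finset V) (k : ℕ) : Prop :=
  ∀ i, i + 1 < k → IsShift (W i) (W (i + 1))

def trimChain (W : ℕ → Finset V) : ℕ → Finset V
  | 0 => (W 0).dropMax
  | t + 1 => (W t).dropMin

namespace IsShiftChain

variable {W : ℕ → Finset V} {k : ℕ}

theorem card_eq (hW : IsShiftChain W k) : ∀ t < k, (W t).card = (W 0).card
  | 0, _ => rfl
  | t + 1, ht => (hW t ht).card_eq.symm.trans (hW.card_eq t (by omega))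

theorem injOn (hW : IsShiftChain W k) : Set.InjOn W (Set.Iio k) := by
  have hmono : StrictMonoOn (fun t => (W t).min) (Set.Iio k) := by
    intro i _ j hj hij
    induction j, hij using Nat.le_induction with
    | base => exact (hW i hj).min_lt
    | succ j hij ih =>
      exact (ih (Set.mem_Iio.2 (by simp only [Set.mem_Iio] at hj; omega))).trans
        (hW j hj).min_lt
  exact Set.InjOn.of_comp (g := Finset.min) hmono.injOn

theorem card_filter_lt_add {x : V} (hW : IsShiftChain W k) (hx : ∀ t < k, x ∈ W t) :
    ∀ t < k, ((W t).filter (· < x)).card + t = ((W 0).filter (· < x)).card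
  | 0, _ => rfl
  | t + 1, ht => by
    rw [← hW.card_filter_lt_add hx t (by omega),
      (hW t ht).card_filter_lt (hx t (by omega)) (hx (t + 1) ht)]
    omega

theorem eq_of_card_filter_lt_modEq {x : V} (hW : IsShiftChain W k) (hx : ∀ t < k, x ∈ W t)
    {t t' : ℕ} (ht : t < k) (ht' : t' < k)
    (h : ((W t).filter (· < x)).card ≡ ((W t').filter (· < x)).card [MOD k]) : t = t' := by
  refine Nat.ModEq.eq_of_lt_of_lt (h.add_left_cancel ?_) ht ht'
  rw [hW.card_filter_lt_add hx t ht, hW.card_filter_lt_add hx t' ht']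

theorem trimChain (hW : IsShiftChain W k) (hW2 : 2 ≤ (W 0).card) :
    IsShiftChain (Finset.trimChain W) (k + 1)
  | 0, _ => isShift_dropMax_dropMin hW2
  | i + 1, hi => by
    change IsShift (W i).dropMin (W (i + 1)).dropMin
    rw [(hW i (by omega)).dropMin_eq_dropMax]
    exact isShift_dropMax_dropMin (hW.card_eq (i + 1) (by omega) ▸ hW2)

end IsShiftChain

end Finset

section Ramsey

variable {V : Type u} [LinearOrder V]

theorem exists_isShift_map_eq {α : Type u} (c : Finset V → α) {i n : ℕ} (hn : 1 ≤ n)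
    (hα : #α ≤ ℶ_ i) (hV : ℶ_ (i + n : ℕ) < #V) :
    ∃ A B, Finset.IsShift A B ∧ A.card = n ∧ c A = c B := by
  obtain ⟨m, rfl⟩ : ∃ m, n = m + 1 := ⟨n - 1, by omega⟩
  clear hn
  induction m generalizing i α with
  | zero =>
    have hαV : #α < #V := hα.trans_lt ((beth_lt_beth.2 (by simp)).trans hV)
    obtain ⟨x, y, hc, hxy⟩ := Function.not_injective_iff.1 fun h =>
      (mk_le_of_injective (f := fun x : V => c {x}) h).not_gt hαV
    rcases hxy.lt_or_gt with h | h
    · exact ⟨{x}, {y}, Finset.isShift_singleton h, Finset.card_singleton x, hc⟩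
    · exact ⟨{y}, {x}, Finset.isShift_singleton h, Finset.card_singleton y, hc.symm⟩
  | succ m ih =>
    let extensionColors : Finset V → Set α := fun A =>
      {γ | ∃ z, (∀ t ∈ A, t < z) ∧ c (insert z A) = γ}
    have hα' : #(Set α) ≤ ℶ_ ↑(i + 1) := by
      rw [mk_set, Nat.cast_succ, beth_add_one]
      exact power_le_power_left two_ne_zero hα
    obtain ⟨_, _, ⟨x, y, s, hxy, hs, rfl, rfl⟩, hcard, hext⟩ :=
      ih extensionColors hα' (by rwa [show i + 1 + (m + 1) = i + (m + 1 + 1) by omega])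
    have hy : ∀ t ∈ insert x s, t < y := by
      simp only [Finset.mem_insert, forall_eq_or_imp]
      exact ⟨hxy, fun t ht => (hs t ht).2⟩
    obtain ⟨z, hz, hcz⟩ : c (insert y (insert x s)) ∈ extensionColors (insert y s) :=
      hext ▸ ⟨y, hy, rfl⟩
    have hyz := hz y (Finset.mem_insert_self y s)
    refine ⟨insert x (insert y s), insert z (insert y s),
      ⟨x, z, insert y s, hxy.trans hyz, ?_, rfl, rfl⟩, ?_, ?_⟩
    · simp only [Finset.mem_insert, forall_eq_or_imp]
      exact ⟨⟨hxy, hyz⟩, fun t ht => ⟨(hs t ht).1, hz t (Finset.mem_insert_of_mem ht)⟩⟩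
    · rw [Finset.insert_comm, Finset.card_insert_of_notMem fun h => (hy y h).false, hcard]
    · rw [Finset.insert_comm, hcz]

theorem exists_isShiftChain_map_eq {α : Type u} (c : Finset V → α) {i n k : ℕ} (hn : 1 ≤ n)
    (hk : 2 ≤ k) (hα : #α ≤ ℶ_ i) (hV : ℶ_ (i + n + k : ℕ) < #V) :
    ∃ W, Finset.IsShiftChain W k ∧ (W 0).card = n ∧ ∀ t < k, c (W t) = c (W 0) := by
  induction k, hk using Nat.le_induction generalizing n α with
  | base =>
    obtain ⟨A, B, hAB, hA, hc⟩ := exists_isShift_map_eq c hn hα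
      ((beth_le_beth.2 (by simp)).trans_lt hV)
    refine ⟨fun t => if t = 0 then A else B, fun t ht => ?_, hA, fun t ht => ?_⟩
    · obtain rfl : t = 0 := by omega
      exact hAB
    · rcases t with _ | _ <;> simp [hc]
  | succ k hk ih =>
    have hα' : #(α × α) ≤ ℶ_ i := by
      simpa [mul_eq_self (aleph0_le_beth _)] using mul_le_mul' hα hα
    -- Colour an `(n + 1)`-set by the colours of its two `n`-subsets missing an endpoint: a
    -- monochromatic chain of `(n + 1)`-sets then trims to a monochromatic chain of `n`-sets.
    obtain ⟨W, hW, hW0, hc⟩ := ih (n := n + 1) (fun A => (c A.dropMax, c A.dropMin)) (by omega)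
      hα' (by rwa [show i + (n + 1) + k = i + n + (k + 1) by omega])
    have hcW : ∀ t < k, c (W t).dropMin = c (W 0).dropMax := fun t ht => by
      rw [(Prod.mk.inj (hc t ht)).2, (hW 0 (by omega)).dropMin_eq_dropMax,
        (Prod.mk.inj (hc 1 (by omega))).1]
    refine ⟨Finset.trimChain W, hW.trimChain (by omega), ?_, ?_⟩
    · have := Finset.card_dropMax_add_one (W := W 0) (Finset.card_pos.1 (by omega))
      simp only [Finset.trimChain]
      omega
    · rintro (_ | t) ht
      exacts [rfl, hcW t (by omega)]

end Ramsey

def shiftHypergraph (V : Type*) [LinearOrder V] (n k : ℕ) : Set (Set (Finset V)) :=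
  {e | ∃ W, Finset.IsShiftChain W k ∧ (W 0).card = n ∧ e = W '' Set.Iio k}

section ShiftHypergraph

variable {V : Type u} [LinearOrder V] {n k : ℕ}

theorem ncard_of_mem_shiftHypergraph {e : Set (Finset V)} (he : e ∈ shiftHypergraph V n k) :
    e.ncard = k := by
  obtain ⟨W, hW, -, rfl⟩ := he
  rw [hW.injOn.ncard_image, ← Finset.coe_range, Set.ncard_coe_finset, Finset.card_range]

theorem aleph_one_le_chromaticNumber_shiftHypergraph (hn : 1 ≤ n) (hk : 2 ≤ k)
    (hV : ℶ_ (n + k : ℕ) < #V) :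
    aleph 1 ≤ chromaticNumber (Finset V) (shiftHypergraph V n k) := by
  refine le_csInf ⟨_, Finset V, id, rfl, ?_⟩ ?_
  · rintro _ ⟨W, hW, -, rfl⟩
    exact ⟨W 0, Set.mem_image_of_mem W (Set.mem_Iio.2 (by omega)), W 1,
      Set.mem_image_of_mem W (Set.mem_Iio.2 (by omega)), (hW 0 (by omega)).ne⟩
  · rintro _ ⟨α, f, rfl, hf⟩
    by_contra! hα
    rw [← succ_aleph0, Order.lt_succ_iff, ← beth_zero] at hα
    obtain ⟨W, hW, hW0, hc⟩ := exists_isShiftChain_map_eq f hn hk (i := 0) (by simpa using hα)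
      (by simpa using hV)
    obtain ⟨_, ⟨s, hs, rfl⟩, _, ⟨t, ht, rfl⟩, hst⟩ := hf _ ⟨W, hW, hW0, rfl⟩
    exact hst ((hc s hs).trans (hc t ht).symm)

end ShiftHypergraph

theorem SimpleGraph.Walk.card_sdiff_le_length {VF V : Type*} [DecidableEq V]
    {G : SimpleGraph VF} {f : VF → Finset V} (hf : ∀ u v, G.Adj u v → (f u \ f v).card ≤ 1)
    {u v : VF} (p : G.Walk u v) : (f u \ f v).card ≤ p.length := by
  induction p with
  | nil => simp
  | @cons u w v h q ih =>
    calc (f u \ f v).card ≤ (f u \ f w ∪ f w \ f v).card :=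
          Finset.card_le_card (sdiff_triangle _ _ _)
      _ ≤ (f u \ f w).card + (f w \ f v).card := Finset.card_union_le _ _
      _ ≤ (cons h q).length := by rw [length_cons]; linarith [hf u w h]

theorem SimpleGraph.exists_forall_reachable_mem {VF V : Type*} [Fintype VF] [DecidableEq V]
    {G : SimpleGraph VF} {f : VF → Finset V} (hf : ∀ u v, G.Adj u v → (f u \ f v).card ≤ 1)
    {u : VF} (hu : Fintype.card VF * Fintype.card VF < (f u).card) :
    ∃ x, ∀ v, G.Reachable u v → x ∈ f v := by
  classical
  have hbad : ((Finset.univ.filter (G.Reachable u)).biUnion fun v => f u \ f v).card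
      < (f u).card := by
    refine (Finset.card_biUnion_le_card_mul _ _ (Fintype.card VF) fun v hv => ?_).trans_lt
      ((Nat.mul_le_mul_right _ (Finset.card_filter_le _ _)).trans_lt hu)
    obtain ⟨p⟩ := (Finset.mem_filter.1 hv).2
    exact (p.bypass.card_sdiff_le_length hf).trans p.bypass_isPath.length_lt.le
  obtain ⟨x, hx, hxbad⟩ := Finset.exists_mem_notMem_of_card_lt_card hbad
  refine ⟨x, fun v hv => ?_⟩
  by_contra hxv
  exact hxbad (Finset.mem_biUnion.2
    ⟨v, Finset.mem_filter.2 ⟨Finset.mem_univ v, hv⟩, Finset.mem_sdiff.2 ⟨hx, hxv⟩⟩)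

section ShiftGraph

variable {VF V : Type*} [LinearOrder V]

def shiftGraph (φ : VF → Finset V) : SimpleGraph VF :=
  SimpleGraph.fromRel fun u v => (φ u).IsShift (φ v)

theorem card_sdiff_le_one_of_shiftGraph_adj {φ : VF → Finset V} {u v : VF}
    (h : (shiftGraph φ).Adj u v) : (φ u \ φ v).card ≤ 1 := by
  obtain ⟨-, h | h⟩ := h
  · exact h.card_sdiff_le_one
  · rw [Finset.card_sdiff_comm h.card_eq.symm]
    exact h.card_sdiff_le_one

theorem shiftGraph_reachable_of_image_eq {φ : VF → Finset V} (hφ : Function.Injective φ)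
    {W : ℕ → Finset V} {k : ℕ} (hW : Finset.IsShiftChain W k) {e : Set VF}
    (he : φ '' e = W '' Set.Iio k) {w₀ : VF} (hw₀ : φ w₀ = W 0) :
    ∀ w ∈ e, (shiftGraph φ).Reachable w₀ w := by
  suffices h : ∀ t < k, ∀ w, φ w = W t → (shiftGraph φ).Reachable w₀ w by
    intro w hw
    obtain ⟨t, ht, hwt⟩ : φ w ∈ W '' Set.Iio k := he ▸ Set.mem_image_of_mem φ hw
    exact h t ht w hwt.symm
  intro t
  induction t with
  | zero => exact fun _ w hw => (hφ (hw.trans hw₀.symm)) ▸ SimpleGraph.Reachable.refl w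
  | succ t ih =>
    intro ht w hw
    obtain ⟨v, -, hv⟩ : W t ∈ φ '' e := he ▸ Set.mem_image_of_mem W (Set.mem_Iio.2 (by omega))
    have hshift : (φ v).IsShift (φ w) := hv ▸ hw ▸ hW t ht
    exact (ih (by omega) v hv).trans
      (SimpleGraph.Adj.reachable ⟨fun hvw => hshift.ne (hvw ▸ rfl), Or.inl hshift⟩)

end ShiftGraph

theorem Set.ncard_inter_preimage_singleton_of_injOn {X β : Type*} [Fintype β] {e : Set X}
    {c : X → β} (he : e.ncard = Fintype.card β) (hc : e.InjOn c) (j : β) :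
    (e ∩ c ⁻¹' {j}).ncard = 1 := by
  have himage : c '' e = Set.univ := Set.eq_of_subset_of_ncard_le (Set.subset_univ _)
    (by rw [Set.ncard_univ, Nat.card_eq_fintype_card, hc.ncard_image, he])
  obtain ⟨x, hx, rfl⟩ : j ∈ c '' e := himage ▸ Set.mem_univ j
  refine Set.ncard_eq_one.2 ⟨x, Set.eq_singleton_iff_unique_mem.2 ⟨⟨hx, rfl⟩, ?_⟩⟩
  exact fun y hy => hc hy.1 hx hy.2

theorem exists_partite_coloring_of_shiftHypergraph {VF V : Type*} [Fintype VF] [LinearOrder V]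
    [Nonempty V] {n k : ℕ} [NeZero k] (φ : VF → Finset V) (hφ : Function.Injective φ)
    (hn : Fintype.card VF * Fintype.card VF < n) {EF : Set (Set VF)}
    (hEF : ∀ e ∈ EF, φ '' e ∈ shiftHypergraph V n k) (hUnif : ∀ e ∈ EF, e.ncard = k) :
    ∃ c : VF → Fin k, ∀ e ∈ EF, ∀ j, (e ∩ c ⁻¹' {j}).ncard = 1 := by
  classical
  let G := shiftGraph φ
  let ε : G.ConnectedComponent → V := fun C =>
    Classical.epsilon fun x => ∀ v, G.connectedComponentMk v = C → x ∈ φ v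
  refine ⟨fun v => Fin.ofNat k ((φ v).filter (· < ε (G.connectedComponentMk v))).card,
    fun e he => Set.ncard_inter_preimage_singleton_of_injOn (by simpa using hUnif e he) ?_⟩
  obtain ⟨W, hW, hW0, hWe⟩ := hEF e he
  obtain ⟨w₀, -, hw₀⟩ : W 0 ∈ φ '' e := hWe ▸ Set.mem_image_of_mem W (Nat.pos_of_neZero k)
  have hreach := shiftGraph_reachable_of_image_eq hφ hW hWe hw₀
  have hcomp : ∀ w ∈ e, G.connectedComponentMk w = G.connectedComponentMk w₀ :=
    fun w hw => SimpleGraph.ConnectedComponent.eq.2 (hreach w hw).symm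
  set x := ε (G.connectedComponentMk w₀)
  have hx : ∀ t < k, x ∈ W t := by
    obtain ⟨y, hy⟩ := SimpleGraph.exists_forall_reachable_mem
      (fun u v => card_sdiff_le_one_of_shiftGraph_adj) (hw₀ ▸ hW0 ▸ hn : _ < (φ w₀).card)
    have hxmem := Classical.epsilon_spec (p := fun x => ∀ v,
      G.connectedComponentMk v = G.connectedComponentMk w₀ → x ∈ φ v)
      ⟨y, fun v hv => hy v (SimpleGraph.ConnectedComponent.eq.1 hv.symm)⟩
    intro t ht
    obtain ⟨w, hw, hwt⟩ : W t ∈ φ '' e := hWe ▸ Set.mem_image_of_mem W ht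
    exact hwt ▸ hxmem w (hcomp w hw)
  intro w hw w' hw' hcw
  obtain ⟨t, ht, hwt⟩ : φ w ∈ W '' Set.Iio k := hWe ▸ Set.mem_image_of_mem φ hw
  obtain ⟨t', ht', hwt'⟩ : φ w' ∈ W '' Set.Iio k := hWe ▸ Set.mem_image_of_mem φ hw'
  simp only [hcomp w hw, hcomp w' hw', ← hwt, ← hwt', Fin.ext_iff, Fin.val_ofNat] at hcw
  obtain rfl := hW.eq_of_card_filter_lt_modEq hx ht ht' hcw
  exact hφ (hwt.symm.trans hwt')

/-- Every obligatory finite `k`-uniform hypergraph is `k`-partite: its vertex set can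
be partitioned into `k` classes (colour classes of some `c : VF → Fin k`) such that
every edge meets each class in exactly one vertex. -/
theorem obligatory_is_kpartite (k : ℕ) (hk : 2 ≤ k)
    {VF : Type} [Finite VF] (EF : Set (Set VF)) (hUnif : ∀ e ∈ EF, e.ncard = k)
    (hObl : Obligatory.{u} k EF) :
    ∃ c : VF → Fin k, ∀ e ∈ EF, ∀ j : Fin k, (e ∩ c ⁻¹' {j}).ncard = 1 := by
  have := Fintype.ofFinite VF
  have : NeZero k := ⟨by omega⟩
  set n := Fintype.card VF * Fintype.card VF + 1
  let V := (ℶ_ (n + k + 1 : ℕ) : Cardinal.{u}).ord.ToType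
  have hV : ℶ_ (n + k : ℕ) < #V := by
    rw [mk_ord_toType, beth_lt_beth]
    simp
  have : Nonempty V := mk_ne_zero_iff.1 (beth_ne_zero _ ∘ (mk_ord_toType _).symm.trans)
  obtain ⟨φ, hφ, hφE⟩ := hObl (Finset V) (shiftHypergraph V n k)
    (fun _ => ncard_of_mem_shiftHypergraph)
    (aleph_one_le_chromaticNumber_shiftHypergraph (by omega) hk hV)
  exact exists_partite_coloring_of_shiftHypergraph φ hφ (by omega) hφE hUnif
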